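/- arXiv:1810.09175 — 2 statements merged into one kernel-verified Lean document; each statement's English description precedes it below -/
import Mathlib

section
/- Let p be a prime and let M be a p-minor subset of ℕ₀. Then 𝒫(M) is a polynomial linearly closed clonoid, and 𝒞(M) is a linearly closed clonoid on Z_p. -/
/-- A finitary operation on `A`: an element of arity `n + 1` (so every arity is `≥ 1`). -/
abbrev Ops (A : Type) := Σ n : ℕ, ((Fin (n + 1) → A) → A)

/-- The product `E·F` of two sets of finitary operations:
all compositions `f ∘ (g₁, …, gₙ)` with `f ∈ E` and all `gᵢ ∈ F` of a common arity. -/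
def OpProd {A : Type} (E F : Set (Ops A)) : Set (Ops A) :=
  { h | ∃ (n m : ℕ) (f : (Fin (n + 1) → A) → A) (g : Fin (n + 1) → (Fin (m + 1) → A) → A),
      (⟨n, f⟩ : Ops A) ∈ E ∧ (∀ i, (⟨m, g i⟩ : Ops A) ∈ F) ∧
      h = ⟨m, fun x => f (fun i => g i x)⟩ }

/-- The set `Lin(Z_p)` of linear operations `(x₁, …, xₙ) ↦ Σ aᵢ xᵢ` on `ZMod p`. -/
def LinOps (p : ℕ) : Set (Ops (ZMod p)) :=
  { h | ∃ (n : ℕ) (a : Fin (n + 1) → ZMod p), h = ⟨n, fun x => ∑ i, a i * x i⟩ }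

/-- A linearly closed clonoid on `ZMod p`. -/
def IsLCC (p : ℕ) (C : Set (Ops (ZMod p))) : Prop :=
  C.Nonempty ∧ OpProd (LinOps p) C ⊆ C ∧ OpProd C (LinOps p) ⊆ C

/-- The sum `D₁ + D₂` of two sets of operations on `ZMod p`. -/
def LCCsum (p : ℕ) (D₁ D₂ : Set (Ops (ZMod p))) : Set (Ops (ZMod p)) :=
  { h | ∃ (n : ℕ) (f g : (Fin (n + 1) → ZMod p) → ZMod p),
      (⟨n, f⟩ : Ops (ZMod p)) ∈ D₁ ∧ (⟨n, g⟩ : Ops (ZMod p)) ∈ D₂ ∧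
      h = ⟨n, fun x => f x + g x⟩ }

/-- The linearly closed clonoid on `ZMod p` generated by a set `F` of operations. -/
def genLC (p : ℕ) (F : Set (Ops (ZMod p))) : Set (Ops (ZMod p)) :=
  ⋂₀ { C | IsLCC p C ∧ F ⊆ C }

/-- A finitely generated linearly closed clonoid on `ZMod p`. -/
def FinGenLCC (p : ℕ) (C : Set (Ops (ZMod p))) : Prop :=
  ∃ F : Set (Ops (ZMod p)), F.Finite ∧ C = genLC p F

/-- A `p`-minor subset of `ℕ`. -/
def IsPMinor (p : ℕ) (M : Set ℕ) : Prop :=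
  ∀ n ∈ M, n > p - 1 → n - (p - 1) ∈ M

/-- A reduced polynomial: every variable exponent is at most `p - 1`. -/
def IsReducedPoly (p : ℕ) (f : MvPolynomial ℕ (ZMod p)) : Prop :=
  ∀ d ∈ f.support, ∀ i, d i ≤ p - 1

/-- The `(n+1)`-ary operation on `ZMod p` induced by a polynomial
(meaningful when all variables of `f` have index `< n + 1`). -/
noncomputable def inducedOp (p n : ℕ) (f : MvPolynomial ℕ (ZMod p)) : (Fin (n + 1) → ZMod p) → ZMod p :=
  fun x => MvPolynomial.eval (fun i => if h : i < n + 1 then x ⟨i, h⟩ else 0) f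

/-- `𝒞(M)`: all constant-zero operations together with all operations induced by a nonzero
reduced polynomial each of whose monomials has total degree in `M`. -/
def CM (p : ℕ) (M : Set ℕ) : Set (Ops (ZMod p)) :=
  { h | ∃ n : ℕ, h = ⟨n, fun _ => 0⟩ } ∪
  { h | ∃ (n : ℕ) (f : MvPolynomial ℕ (ZMod p)), f ≠ 0 ∧ IsReducedPoly p f ∧
      (∀ i ∈ f.vars, i < n + 1) ∧ (∀ d ∈ f.support, (d.sum fun _ e => e) ∈ M) ∧
      h = ⟨n, inducedOp p n f⟩ }

/-- `𝒫(M)`: polynomials each of whose monomials has total degree in `M` (this includes `0`). -/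
def PM (p : ℕ) (M : Set ℕ) : Set (MvPolynomial ℕ (ZMod p)) :=
  { f | ∀ d ∈ f.support, (d.sum fun _ e => e) ∈ M }

/-- The set `L` of linear polynomials `Σ aᵢ xᵢ`. -/
def LinPoly (p : ℕ) : Set (MvPolynomial ℕ (ZMod p)) :=
  { f | ∃ (s : Finset ℕ) (a : ℕ → ZMod p),
      f = ∑ i ∈ s, MvPolynomial.C (a i) * MvPolynomial.X i }

/-- The product `A·B` of two sets of polynomials: substitute members of `B` for the
variables of a member of `A` (regarded as `n`-ary). -/
def PolyProd (p : ℕ) (A B : Set (MvPolynomial ℕ (ZMod p))) :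
    Set (MvPolynomial ℕ (ZMod p)) :=
  { h | ∃ (n : ℕ) (f : MvPolynomial ℕ (ZMod p)) (g : ℕ → MvPolynomial ℕ (ZMod p)),
      f ∈ A ∧ (∀ i ∈ f.vars, i < n) ∧ (∀ i < n, g i ∈ B) ∧ h = MvPolynomial.aeval g f }

/-- A polynomial linearly closed clonoid. -/
def IsPLC (p : ℕ) (C : Set (MvPolynomial ℕ (ZMod p))) : Prop :=
  C.Nonempty ∧ PolyProd p (LinPoly p) C ⊆ C ∧ PolyProd p C (LinPoly p) ⊆ C

/-- The polynomial linearly closed clonoid generated by `F`. -/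
def genPLC (p : ℕ) (F : Set (MvPolynomial ℕ (ZMod p))) : Set (MvPolynomial ℕ (ZMod p)) :=
  ⋂₀ { C | IsPLC p C ∧ F ⊆ C }

/-- A clone on `A`: contains all projections and is closed under composition. -/
def IsClone {A : Type} (C : Set (Ops A)) : Prop :=
  (∀ (n : ℕ) (j : Fin (n + 1)), (⟨n, fun x => x j⟩ : Ops A) ∈ C) ∧ OpProd C C ⊆ C

/-- The clone generated by a set of operations. -/
def cloneGen {A : Type} (F : Set (Ops A)) : Set (Ops A) :=
  ⋂₀ { C | IsClone C ∧ F ⊆ C }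

/-- A finitely generated clone. -/
def FinGenClone {A : Type} (C : Set (Ops A)) : Prop :=
  ∃ F : Set (Ops A), F.Finite ∧ C = cloneGen F

/-- The binary addition operation, as a finitary operation. -/
def plusOp (A : Type) [Add A] : Ops A := ⟨1, fun x => x 0 + x 1⟩

/-- The set of all projections. -/
def ProjOps (A : Type) : Set (Ops A) :=
  { h | ∃ (n : ℕ) (j : Fin (n + 1)), h = ⟨n, fun x => x j⟩ }

/-- A linearly closed iterative algebra on `ZMod p`. -/
def IsLCIA (p : ℕ) (C : Set (Ops (ZMod p))) : Prop :=
  IsLCC p C ∧ OpProd C (C ∪ ProjOps (ZMod p)) ⊆ C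

/-- The clone `Aff(Z_p)` of affine operations `(x₁, …, xₙ) ↦ c + Σ aᵢ xᵢ`. -/
def AffOps (p : ℕ) : Set (Ops (ZMod p)) :=
  { h | ∃ (n : ℕ) (c : ZMod p) (a : Fin (n + 1) → ZMod p),
      h = ⟨n, fun x => c + ∑ i, a i * x i⟩ }

/-- An operation preserves an automorphism `π` of `(ZMod p, +)`. -/
def PreservesAut {p : ℕ} (h : Ops (ZMod p)) (π : AddAut (ZMod p)) : Prop :=
  ∀ x : Fin (h.1 + 1) → ZMod p, h.2 (fun i => π (x i)) = π (h.2 x)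

/-- An operation preserves the unary relation `{0}`. -/
def Preserves0 {p : ℕ} (h : Ops (ZMod p)) : Prop :=
  h.2 (fun _ => 0) = 0

/-- The embedding `φ` of linearly closed clonoids on `ZMod p` into sets of operations
on `ZMod p × ZMod p`. -/
def phiMap (p : ℕ) (C : Set (Ops (ZMod p))) : Set (Ops (ZMod p × ZMod p)) :=
  { h | ∃ (n : ℕ) (l₁ l₂ f : (Fin (n + 1) → ZMod p) → ZMod p),
      (⟨n, l₁⟩ : Ops (ZMod p)) ∈ LinOps p ∧ (⟨n, l₂⟩ : Ops (ZMod p)) ∈ LinOps p ∧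
      (⟨n, f⟩ : Ops (ZMod p)) ∈ C ∧
      h = ⟨n, fun x => (l₁ (fun i => (x i).1) + f (fun i => (x i).2),
                        l₂ (fun i => (x i).2))⟩ }


/-!
Substituting linear forms into a monomial of total degree `k` yields a homogeneous polynomial of
degree `k`, and linear combinations create no new monomials; this gives all closure properties of
`𝒫(M)`, and the closure of `𝒞(M)` under `Lin · 𝒞(M)`. For `𝒞(M) · Lin` the substituted polynomial
need not be reduced. Over `ZMod p` every positive exponent `e` may be replaced by its representative
in `{1, …, p - 1}` modulo `p - 1` without changing the induced function (Fermat); this lowers total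
degrees by multiples of `p - 1`, and since `M` is `p`-minor they stay in `M`.
-/

open MvPolynomial

namespace MvPolynomial

variable {σ τ R S : Type*} [CommSemiring R] [CommSemiring S] [Algebra R S]

theorem aeval_congr_vars {f : MvPolynomial σ R} {g₁ g₂ : σ → S}
    (h : ∀ i ∈ f.vars, g₁ i = g₂ i) : aeval g₁ f = aeval g₂ f := by
  simp only [aeval_eq_eval₂Hom]
  exact eval₂Hom_congr' rfl (fun i hi _ => h i hi) rfl

theorem aeval_mem_restrictSupport_degree {D : Set ℕ} {f : MvPolynomial σ R}
    (hf : f ∈ restrictSupport R {d | d.degree ∈ D}) {g : σ → MvPolynomial τ S}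
    (hg : ∀ i, (g i).IsHomogeneous 1) :
    aeval g f ∈ restrictSupport S {d | d.degree ∈ D} := by
  rw [f.as_sum, map_sum]
  refine Submodule.sum_mem _ fun d hd => ?_
  have hhom : (aeval g (monomial d (f.coeff d))).IsHomogeneous d.degree := by
    simpa using (isHomogeneous_monomial (f.coeff d) rfl).aeval g hg
  have hdeg : {e : τ →₀ ℕ | e.degree = d.degree} ⊆ {e | e.degree ∈ D} := by
    rintro e (he : e.degree = d.degree)
    show e.degree ∈ D
    exact he ▸ hf hd
  refine restrictSupport_mono S hdeg ?_
  rw [restrictSupport, ← homogeneousSubmodule_eq_finsupp_supported]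
  exact hhom

theorem isHomogeneous_sum_C_mul_X {ι : Type*} (s : Finset ι) (a : ι → R) (v : ι → σ) :
    (∑ i ∈ s, C (a i) * X (v i)).IsHomogeneous 1 :=
  IsHomogeneous.sum _ _ _ fun i _ => by
    simpa using (isHomogeneous_C σ (a i)).mul (isHomogeneous_X R (v i))

theorem aeval_sum_C_mul_X (s : Finset σ) (a : σ → R) (g : σ → S) :
    aeval g (∑ i ∈ s, C (a i) * X i) = ∑ i ∈ s, a i • g i := by
  simp [Algebra.smul_def]

end MvPolynomial

theorem PolyProd_subset {p : ℕ} {A B C : Set (MvPolynomial ℕ (ZMod p))} (hB : 0 ∈ B)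
    (h : ∀ f ∈ A, ∀ g : ℕ → MvPolynomial ℕ (ZMod p), (∀ i, g i ∈ B) → aeval g f ∈ C) :
    PolyProd p A B ⊆ C := by
  classical
  rintro _ ⟨n, f, g, hf, hvars, hg, rfl⟩
  have hres : aeval g f = aeval (fun i => if i < n then g i else 0) f :=
    aeval_congr_vars fun i hi => (if_pos (hvars i hi)).symm
  rw [hres]
  refine h f hf _ fun i => ?_
  split_ifs with hi
  exacts [hg i hi, hB]

theorem PM_eq_restrictSupport (p : ℕ) (M : Set ℕ) :
    PM p M = restrictSupport (ZMod p) {d : ℕ →₀ ℕ | d.degree ∈ M} :=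
  rfl

theorem isPLC_PM (p : ℕ) (M : Set ℕ) : IsPLC p (PM p M) := by
  rw [IsPLC, PM_eq_restrictSupport]
  refine ⟨⟨0, Submodule.zero_mem _⟩, PolyProd_subset (Submodule.zero_mem _) ?_,
    PolyProd_subset ⟨∅, 0, by simp⟩ ?_⟩
  · rintro _ ⟨s, a, rfl⟩ g hg
    rw [aeval_sum_C_mul_X]
    exact Submodule.sum_mem _ fun i _ => Submodule.smul_mem _ _ (hg i)
  · intro f hf g hg
    refine aeval_mem_restrictSupport_degree hf fun i => ?_
    obtain ⟨s, a, hgi⟩ := hg i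
    rw [hgi]
    exact isHomogeneous_sum_C_mul_X s a id

section ExponentReduction

variable {p : ℕ}

def reduceExponent (p e : ℕ) : ℕ :=
  if e = 0 then 0 else (e - 1) % (p - 1) + 1

theorem reduceExponent_le (hp : 1 < p) (e : ℕ) : reduceExponent p e ≤ p - 1 := by
  unfold reduceExponent
  split_ifs
  · omega
  · have := Nat.mod_lt (e - 1) (show 0 < p - 1 by omega)
    omega

theorem reduceExponent_eq_zero_iff {e : ℕ} : reduceExponent p e = 0 ↔ e = 0 := by
  unfold reduceExponent
  split_ifs with h <;> simp [h]

theorem exists_eq_reduceExponent_add (p e : ℕ) : ∃ k, e = reduceExponent p e + k * (p - 1) := by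
  unfold reduceExponent
  split_ifs
  · exact ⟨0, by simp [*]⟩
  · refine ⟨(e - 1) / (p - 1), ?_⟩
    have := Nat.mod_add_div (e - 1) (p - 1)
    rw [mul_comm] at this
    omega

theorem pow_reduceExponent (hp : p.Prime) (a : ZMod p) (e : ℕ) :
    a ^ reduceExponent p e = a ^ e := by
  have : Fact p.Prime := ⟨hp⟩
  obtain ⟨k, hk⟩ := exists_eq_reduceExponent_add p e
  rcases eq_or_ne a 0 with rfl | ha
  · rcases eq_or_ne e 0 with rfl | he
    · rfl
    · rw [zero_pow he, zero_pow (reduceExponent_eq_zero_iff.not.2 he)]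
  · conv_rhs => rw [hk, pow_add, mul_comm k, pow_mul, ZMod.pow_card_sub_one_eq_one ha, one_pow,
      mul_one]

noncomputable def reduceMonomial (p : ℕ) (d : ℕ →₀ ℕ) : ℕ →₀ ℕ :=
  d.mapRange (reduceExponent p) (by simp [reduceExponent])

@[simp]
theorem reduceMonomial_apply (d : ℕ →₀ ℕ) (i : ℕ) :
    reduceMonomial p d i = reduceExponent p (d i) :=
  rfl

@[simp]
theorem support_reduceMonomial (d : ℕ →₀ ℕ) : (reduceMonomial p d).support = d.support := by
  ext i
  simp [reduceExponent_eq_zero_iff]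

theorem exists_degree_eq_reduceMonomial_add (p : ℕ) (d : ℕ →₀ ℕ) :
    ∃ k, d.degree = (reduceMonomial p d).degree + k * (p - 1) := by
  choose k hk using exists_eq_reduceExponent_add p
  refine ⟨∑ i ∈ d.support, k (d i), ?_⟩
  rw [Finsupp.degree_apply, Finsupp.degree_apply, support_reduceMonomial, Finset.sum_mul,
    ← Finset.sum_add_distrib]
  exact Finset.sum_congr rfl fun i _ => hk (d i)

theorem IsPMinor.mem_of_add_mul {M : Set ℕ} (hM : IsPMinor p M) {m : ℕ} (hm : 1 ≤ m) (k : ℕ)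
    (h : m + k * (p - 1) ∈ M) : m ∈ M := by
  induction k with
  | zero => simpa using h
  | succ k ih =>
    refine ih ?_
    have hgt : m + (k + 1) * (p - 1) > p - 1 := by nlinarith
    have := hM _ h hgt
    rwa [add_mul, one_mul, ← add_assoc, Nat.add_sub_cancel] at this

theorem IsPMinor.degree_reduceMonomial_mem {M : Set ℕ} (hM : IsPMinor p M) {d : ℕ →₀ ℕ}
    (hd : d.degree ∈ M) : (reduceMonomial p d).degree ∈ M := by
  obtain ⟨k, hk⟩ := exists_degree_eq_reduceMonomial_add p d
  rcases Nat.eq_zero_or_pos (reduceMonomial p d).degree with h0 | hpos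
  · have hd0 : d = 0 := by
      rwa [Finsupp.degree_eq_zero_iff, ← Finsupp.support_eq_empty, support_reduceMonomial,
        Finsupp.support_eq_empty] at h0
    rw [h0]
    simpa [hd0] using hd
  · exact hM.mem_of_add_mul hpos k (hk ▸ hd)

end ExponentReduction

section PolynomialReduction

variable {p : ℕ}

noncomputable def reducePoly (p : ℕ) (f : MvPolynomial ℕ (ZMod p)) : MvPolynomial ℕ (ZMod p) :=
  ∑ d ∈ f.support, monomial (reduceMonomial p d) (f.coeff d)

theorem support_reducePoly_subset (f : MvPolynomial ℕ (ZMod p)) :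
    (reducePoly p f).support ⊆ f.support.image (reduceMonomial p) := by
  classical
  refine support_sum.trans fun d hd => ?_
  obtain ⟨d₀, hd₀, hd⟩ := Finset.mem_biUnion.1 hd
  rw [Finset.mem_singleton.1 (support_monomial_subset hd)]
  exact Finset.mem_image_of_mem _ hd₀

theorem eval_reducePoly (hp : p.Prime) (x : ℕ → ZMod p) (f : MvPolynomial ℕ (ZMod p)) :
    eval x (reducePoly p f) = eval x f := by
  conv_rhs => rw [f.as_sum]
  simp only [reducePoly, map_sum, eval_monomial, Finsupp.prod, support_reduceMonomial,
    reduceMonomial_apply, pow_reduceExponent hp]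

noncomputable def cmPolys (p : ℕ) (M : Set ℕ) (n : ℕ) :
    Submodule (ZMod p) (MvPolynomial ℕ (ZMod p)) :=
  restrictSupport (ZMod p) {d | d.degree ∈ M ∧ (∀ i, d i ≤ p - 1) ∧ ∀ i ∈ d.support, i < n + 1}

theorem reducePoly_mem_cmPolys (hp : p.Prime) {M : Set ℕ} (hM : IsPMinor p M) {n : ℕ}
    {f : MvPolynomial ℕ (ZMod p)}
    (hf : f ∈ restrictSupport (ZMod p) {d | d.degree ∈ M ∧ ∀ i ∈ d.support, i < n + 1}) :
    reducePoly p f ∈ cmPolys p M n := by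
  intro d hd
  obtain ⟨d₀, hd₀, rfl⟩ := Finset.mem_image.1 (support_reducePoly_subset f hd)
  obtain ⟨hdeg, hvars⟩ := hf hd₀
  refine ⟨hM.degree_reduceMonomial_mem hdeg, fun i => ?_, ?_⟩
  · exact reduceExponent_le hp.one_lt _
  · rwa [support_reduceMonomial]

end PolynomialReduction

section Clonoid

variable {p : ℕ}

@[simp]
theorem inducedOp_zero (p n : ℕ) : inducedOp p n 0 = fun _ => 0 := by
  funext x
  simp [inducedOp]

theorem mk_mem_LinOps_iff {n : ℕ} {f : (Fin (n + 1) → ZMod p) → ZMod p} :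
    (⟨n, f⟩ : Ops (ZMod p)) ∈ LinOps p ↔
      ∃ a : Fin (n + 1) → ZMod p, f = fun x => ∑ i, a i * x i := by
  constructor
  · rintro ⟨n', a, h⟩
    obtain rfl : n = n' := congrArg Sigma.fst h
    exact ⟨a, sigma_mk_injective h⟩
  · rintro ⟨a, rfl⟩
    exact ⟨n, a, rfl⟩

theorem mk_mem_CM_iff {M : Set ℕ} {n : ℕ} {f : (Fin (n + 1) → ZMod p) → ZMod p} :
    (⟨n, f⟩ : Ops (ZMod p)) ∈ CM p M ↔ ∃ F ∈ cmPolys p M n, f = inducedOp p n F := by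
  constructor
  · rintro (⟨n', h⟩ | ⟨n', F, -, hred, hvars, hdeg, h⟩) <;>
      obtain rfl : n = n' := congrArg Sigma.fst h
    · exact ⟨0, Submodule.zero_mem _, by rw [sigma_mk_injective h, inducedOp_zero]⟩
    · refine ⟨F, fun d hd => ⟨hdeg d hd, hred d hd, fun i hi => hvars i ?_⟩, sigma_mk_injective h⟩
      exact (mem_vars_iff_mem_support i).2 ⟨d, hd, hi⟩
  · rintro ⟨F, hF, rfl⟩
    rcases eq_or_ne F 0 with rfl | hF0
    · exact Or.inl ⟨n, by rw [inducedOp_zero]⟩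
    · refine Or.inr ⟨n, F, hF0, fun d hd => (hF hd).2.1, fun i hi => ?_,
        fun d hd => (hF hd).1, rfl⟩
      obtain ⟨d, hd, hi⟩ := (mem_vars_iff_mem_support i).1 hi
      exact (hF hd).2.2 i hi

theorem LinOps_mul_CM_subset (M : Set ℕ) : OpProd (LinOps p) (CM p M) ⊆ CM p M := by
  rintro _ ⟨n, m, f, g, hf, hg, rfl⟩
  obtain ⟨a, rfl⟩ := mk_mem_LinOps_iff.1 hf
  choose F hF hgF using fun i => mk_mem_CM_iff.1 (hg i)
  refine mk_mem_CM_iff.2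
    ⟨∑ i, a i • F i, Submodule.sum_mem _ fun i _ => Submodule.smul_mem _ _ (hF i), ?_⟩
  funext x
  simp only [hgF, inducedOp, map_sum, smul_eval]

noncomputable def linearSubst {n m : ℕ} (a : Fin (n + 1) → Fin (m + 1) → ZMod p) (i : ℕ) :
    MvPolynomial ℕ (ZMod p) :=
  if h : i < n + 1 then ∑ j : Fin (m + 1), C (a ⟨i, h⟩ j) * X (j : ℕ) else 0

theorem isHomogeneous_linearSubst {n m : ℕ} (a : Fin (n + 1) → Fin (m + 1) → ZMod p) (i : ℕ) :
    (linearSubst a i).IsHomogeneous 1 := by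
  unfold linearSubst
  split_ifs
  exacts [isHomogeneous_sum_C_mul_X _ _ _, isHomogeneous_zero _ _ _]

theorem linearSubst_mem_supported [Fact p.Prime] {n m : ℕ}
    (a : Fin (n + 1) → Fin (m + 1) → ZMod p) (i : ℕ) :
    linearSubst a i ∈ supported (ZMod p) (Set.Iio (m + 1)) := by
  unfold linearSubst
  split_ifs
  · refine Subalgebra.sum_mem _ fun j _ => Subalgebra.mul_mem _ (Subalgebra.algebraMap_mem _ _) ?_
    exact X_mem_supported.2 j.isLt
  · exact Subalgebra.zero_mem _

theorem inducedOp_aeval_linearSubst {n m : ℕ} (a : Fin (n + 1) → Fin (m + 1) → ZMod p)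
    (F : MvPolynomial ℕ (ZMod p)) (x : Fin (m + 1) → ZMod p) :
    inducedOp p m (aeval (linearSubst a) F) x = inducedOp p n F fun i => ∑ j, a i j * x j := by
  refine (aeval_bind₁ _ _ F).trans (congrArg (eval · F) (funext fun i => ?_))
  unfold linearSubst
  split_ifs
  · simp [Fin.is_le]
  · simp

theorem CM_mul_LinOps_subset (hp : p.Prime) {M : Set ℕ} (hM : IsPMinor p M) :
    OpProd (CM p M) (LinOps p) ⊆ CM p M := by
  have : Fact p.Prime := ⟨hp⟩
  rintro _ ⟨n, m, f, g, hf, hg, rfl⟩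
  obtain ⟨F, hF, rfl⟩ := mk_mem_CM_iff.1 hf
  choose a ha using fun i => mk_mem_LinOps_iff.1 (hg i)
  set G := aeval (linearSubst a) F
  have hG_vars : G ∈ supported (ZMod p) (Set.Iio (m + 1)) := by
    refine Algebra.adjoin_le (Set.range_subset_iff.2 (linearSubst_mem_supported a)) ?_
    rw [← aeval_range]
    exact AlgHom.mem_range_self _ F
  have hG_deg : G ∈ restrictSupport (ZMod p) {d | d.degree ∈ M} :=
    aeval_mem_restrictSupport_degree (restrictSupport_mono _ (fun d hd => hd.1) hF)
      (isHomogeneous_linearSubst a)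
  refine mk_mem_CM_iff.2 ⟨reducePoly p G, reducePoly_mem_cmPolys hp hM fun d hd => ?_, ?_⟩
  · refine ⟨hG_deg hd, fun i hi => mem_supported.1 hG_vars ?_⟩
    exact (mem_vars_iff_mem_support i).2 ⟨d, hd, hi⟩
  · funext x
    rw [show inducedOp p m (reducePoly p G) x = inducedOp p m G x from eval_reducePoly hp _ G,
      inducedOp_aeval_linearSubst]
    simp only [ha]

theorem isLCC_CM (hp : p.Prime) {M : Set ℕ} (hM : IsPMinor p M) : IsLCC p (CM p M) :=
  ⟨⟨⟨0, fun _ => 0⟩, Or.inl ⟨0, rfl⟩⟩, LinOps_mul_CM_subset M, CM_mul_LinOps_subset hp hM⟩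

end Clonoid

/-- For a prime `p` and a `p`-minor subset `M`, `𝒫(M)` is a polynomial
linearly closed clonoid and `𝒞(M)` is a linearly closed clonoid on `ZMod p`. -/
theorem statement3 (p : ℕ) (hp : p.Prime) (M : Set ℕ) (hM : IsPMinor p M) :
    IsPLC p (PM p M) ∧ IsLCC p (CM p M) :=
  ⟨isPLC_PM p M, isLCC_CM hp hM⟩
end

section
/- Let p be a prime and let M₁, M₂ be p-minor subsets of ℕ₀. If 𝒞(M₁) = 𝒞(M₂), then M₁ = M₂ (i.e., the map 𝒞 is injective). -/
/-! Over a finite field `K`, a polynomial in which every variable occurs with exponent below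
`|K|` is determined by the function it induces. So an operation induced by a nonzero reduced
polynomial `f` lies in `𝒞(M)` exactly when all monomials of `f` have degree in `M`. The squarefree
monomial `x₀ x₁ ⋯ x_{n-1}` is reduced and has degree `n`, hence `n ∈ M` is read off from `𝒞(M)`. -/

universe u

namespace MvPolynomial

variable {σ K : Type u} [Field K] [Fintype K]

theorem eq_zero_of_forall_eval_eq_zero (f : MvPolynomial σ K) (h : ∀ v : σ → K, eval v f = 0)
    (hf : f ∈ restrictDegree σ K (Fintype.card K - 1)) : f = 0 := by
  obtain ⟨s, q, rfl⟩ := exists_finset_rename f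
  have hinj : Function.Injective ((↑) : s → σ) := Subtype.val_injective
  suffices q = 0 by rw [this, map_zero]
  refine eq_zero_of_eval_eq_zero _ _ q (fun v => ?_) ?_
  · simpa only [eval_rename, Function.comp_def, hinj.extend_apply] using
      h (Function.extend (↑) v 0)
  · rw [MvPolynomial.mem_restrictDegree] at hf ⊢
    intro d hd i
    have hd' : d.mapDomain (↑) ∈ (rename ((↑) : s → σ) q).support := by
      rwa [mem_support_iff, coeff_rename_mapDomain _ hinj, ← mem_support_iff]
    simpa only [Finsupp.mapDomain_apply hinj] using hf _ hd' i

theorem eq_of_forall_eval_eq {f g : MvPolynomial σ K} (h : ∀ v : σ → K, eval v f = eval v g)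
    (hf : f ∈ restrictDegree σ K (Fintype.card K - 1))
    (hg : g ∈ restrictDegree σ K (Fintype.card K - 1)) : f = g :=
  sub_eq_zero.1 <| eq_zero_of_forall_eval_eq_zero _ (fun v => by rw [map_sub, h, sub_self])
    (Submodule.sub_mem _ hf hg)

end MvPolynomial

open MvPolynomial

section InducedOp

variable {p : ℕ} [Fact p.Prime]

theorem IsReducedPoly.mem_restrictDegree {f : MvPolynomial ℕ (ZMod p)} (hf : IsReducedPoly p f) :
    f ∈ restrictDegree ℕ (ZMod p) (Fintype.card (ZMod p) - 1) := by
  rwa [ZMod.card, MvPolynomial.mem_restrictDegree]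

theorem eval_eq_inducedOp {n : ℕ} {f : MvPolynomial ℕ (ZMod p)} (hf : ∀ i ∈ f.vars, i < n + 1)
    (v : ℕ → ZMod p) : eval v f = inducedOp p n f (fun j => v j) :=
  eval₂Hom_congr' rfl (fun i hi _ => by simp [hf i hi]) rfl

theorem eq_of_inducedOp_eq {n : ℕ} {f g : MvPolynomial ℕ (ZMod p)}
    (hf : IsReducedPoly p f) (hg : IsReducedPoly p g)
    (hfv : ∀ i ∈ f.vars, i < n + 1) (hgv : ∀ i ∈ g.vars, i < n + 1)
    (h : inducedOp p n f = inducedOp p n g) : f = g :=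
  eq_of_forall_eval_eq (fun v => by rw [eval_eq_inducedOp hfv, eval_eq_inducedOp hgv, h])
    hf.mem_restrictDegree hg.mem_restrictDegree

theorem mem_PM_of_mem_CM {M : Set ℕ} {n : ℕ} {f : MvPolynomial ℕ (ZMod p)} (hf0 : f ≠ 0)
    (hf : IsReducedPoly p f) (hfv : ∀ i ∈ f.vars, i < n + 1)
    (hmem : (⟨n, inducedOp p n f⟩ : Ops (ZMod p)) ∈ CM p M) : f ∈ PM p M := by
  rcases hmem with ⟨m, hm⟩ | ⟨m, g, -, hg, hgv, hgM, hm⟩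
  · obtain ⟨rfl, hm⟩ := Sigma.mk.inj_iff.1 hm
    refine absurd (eq_of_inducedOp_eq hf (g := 0) (by simp [IsReducedPoly]) hfv (by simp) ?_) hf0
    funext x
    rw [congrFun (eq_of_heq hm) x]
    simp [inducedOp]
  · obtain ⟨rfl, hm⟩ := Sigma.mk.inj_iff.1 hm
    rwa [eq_of_inducedOp_eq hf hg hfv hgv (eq_of_heq hm)]

end InducedOp

theorem subset_of_CM_subset {p : ℕ} [Fact p.Prime] {M₁ M₂ : Set ℕ} (h : CM p M₁ ⊆ CM p M₂) :
    M₁ ⊆ M₂ := by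
  intro n hn
  set d : ℕ →₀ ℕ := ∑ i ∈ Finset.range n, Finsupp.single i 1
  have hd : ∀ i, d i = if i < n then 1 else 0 := by
    simp [d, Finsupp.finsetSum_apply, Finsupp.single_apply]
  have hdeg : (d.sum fun _ e => e) = n := by
    change d.degree = n
    simp [d]
  have hsupp : (monomial d (1 : ZMod p)).support = {d} := by
    rw [support_monomial, if_neg one_ne_zero]
  have hf0 : monomial d (1 : ZMod p) ≠ 0 := by simp
  have hred : IsReducedPoly p (monomial d (1 : ZMod p)) := by
    intro e he i
    rw [hsupp, Finset.mem_singleton] at he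
    rw [he, hd]
    have := (Fact.out : p.Prime).two_le
    split_ifs <;> omega
  have hvars : ∀ i ∈ (monomial d (1 : ZMod p)).vars, i < n + 1 := by
    intro i hi
    rw [vars_monomial one_ne_zero, Finsupp.mem_support_iff, hd] at hi
    split_ifs at hi with hin <;> omega
  have hPM := mem_PM_of_mem_CM hf0 hred hvars <|
    h (Or.inr ⟨n, _, hf0, hred, hvars, by simpa [hsupp, hdeg], rfl⟩)
  simpa [PM, hsupp, hdeg] using hPM

theorem statement7_general (p : ℕ) (hp : p.Prime) (M₁ M₂ : Set ℕ)
    (h : CM p M₁ = CM p M₂) :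
    M₁ = M₂ := by
  have := Fact.mk hp
  exact (subset_of_CM_subset h.subset).antisymm (subset_of_CM_subset h.symm.subset)

/-- The map `𝒞` is injective on `p`-minor subsets. -/
theorem statement7 (p : ℕ) (hp : p.Prime) (M₁ M₂ : Set ℕ)
    (h₁ : IsPMinor p M₁) (h₂ : IsPMinor p M₂) (h : CM p M₁ = CM p M₂) :
    M₁ = M₂ :=
  statement7_general p hp M₁ M₂ h
end
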